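/- Let ς : ℝ → ℝ be C³ with ς(0) = 0, ς'(0) = 0, ς''(0) < 0, let a > 0 and σ > 0, and let v ~ N(0, σ²). Define G(θ) = E[ς(θ + a sin(v)) sin(v)]. Then G'(0) = a·ς''(0)·(1 - e^{-2σ²})/2 + O(a²) as a → 0; in particular, for sufficiently small a, G'(0) < 0. -/

import Mathlib

/-!
Differentiating under the integral (the probe `sin` is bounded, so the `θ`-derivative of the
integrand is dominated by a constant) gives `G'(0) = E[ς'(a sin v) sin v]`. As `ς'(0) = 0`,
Taylor's theorem gives `ς'(x) = ς''(0) x + O(x²)` uniformly on `|x| ≤ |a|`, hence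
`G'(0) = a ς''(0) E[sin² v] + O(a²)`. For Gaussian `v`, the characteristic function gives
`E[sin² v] = (1 - E[cos 2v]) / 2 = (1 - e^{-2σ²}) / 2`.
-/

open MeasureTheory ProbabilityTheory Filter Asymptotics Real Topology
open scoped NNReal

lemma integral_cos_mul_gaussianReal (v : ℝ≥0) (t : ℝ) :
    ∫ y, cos (t * y) ∂gaussianReal 0 v = exp (-(v * t ^ 2 / 2)) := by
  have hint : Integrable (fun y : ℝ => Complex.exp (t * y * Complex.I)) (gaussianReal 0 v) :=
    Integrable.of_bound (by fun_prop) 1 (ae_of_all _ fun y => by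
      rw [← Complex.ofReal_mul, Complex.norm_exp_ofReal_mul_I])
  have h := congrArg Complex.re (charFun_gaussianReal (μ := 0) (v := v) t)
  rw [charFun_apply_real, ← RCLike.re_eq_complex_re, ← integral_re hint] at h
  simp only [← Complex.ofReal_mul, RCLike.re_eq_complex_re, Complex.exp_ofReal_mul_I_re] at h
  rw [h, ← Complex.exp_ofReal_re]
  push_cast
  ring_nf

lemma integral_sin_sq_gaussianReal (v : ℝ≥0) :
    ∫ y, sin y ^ 2 ∂gaussianReal 0 v = (1 - exp (-2 * v)) / 2 := by
  have hcos : Integrable (fun y : ℝ => cos (2 * y)) (gaussianReal 0 v) :=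
    Integrable.of_bound (by fun_prop) 1 (ae_of_all _ fun y => abs_cos_le_one _)
  simp_rw [sin_sq_eq_half_sub]
  rw [integral_sub (integrable_const _) (hcos.div_const 2), integral_const, integral_div,
    integral_cos_mul_gaussianReal]
  simp only [probReal_univ, smul_eq_mul, one_mul]
  ring_nf

lemma abs_mul_sin_le (a y : ℝ) : |a * sin y| ≤ |a| := by
  rw [abs_mul]
  exact mul_le_of_le_one_right (abs_nonneg a) (abs_sin_le_one y)

lemma integrable_comp_sin {μ : Measure ℝ} [IsFiniteMeasure μ] {k : ℝ → ℝ} (hk : Continuous k) :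
    Integrable (fun y => k (sin y)) μ := by
  obtain ⟨C, hC⟩ := (isCompact_Icc (a := -1) (b := 1)).exists_bound_of_continuousOn hk.continuousOn
  exact Integrable.of_bound (by fun_prop) C
    (ae_of_all _ fun y => hC _ ⟨neg_one_le_sin y, sin_le_one y⟩)

lemma ContDiff.isBigO_sub_sub_deriv_mul {g : ℝ → ℝ} (hg : ContDiff ℝ 2 g) (x₀ : ℝ) :
    (fun x => g x - g x₀ - deriv g x₀ * (x - x₀)) =O[𝓝 x₀] fun x => (x - x₀) ^ 2 := by
  have htaylor := (taylor_isLittleO_univ (x₀ := x₀) hg).isBigO.add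
    (isBigO_refl (fun x => (x - x₀) ^ 2) _ |>.const_mul_left (iteratedDeriv 2 g x₀ / 2))
  refine htaylor.congr_left fun x => ?_
  simp only [taylorWithinEval_succ, taylor_within_apply, zero_add, Finset.range_one,
    iteratedDerivWithin_univ, smul_eq_mul, Finset.sum_singleton, Nat.factorial_zero, Nat.cast_one,
    inv_one, pow_zero, mul_one, iteratedDeriv_zero, one_mul, CharP.cast_eq_zero, pow_one,
    iteratedDeriv_one, Nat.factorial_one, Nat.reduceAdd]
  ring

/-- The paper's `G(θ)`, for probe amplitude `a` and probe law `μ`. -/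
noncomputable def averagedGradient (μ : Measure ℝ) (ς : ℝ → ℝ) (a θ : ℝ) : ℝ :=
  ∫ y, ς (θ + a * sin y) * sin y ∂μ

lemma hasDerivAt_averagedGradient {μ : Measure ℝ} [IsFiniteMeasure μ] {ς : ℝ → ℝ}
    (hς : ContDiff ℝ 1 ς) (a θ₀ : ℝ) :
    HasDerivAt (averagedGradient μ ς a) (∫ y, deriv ς (θ₀ + a * sin y) * sin y ∂μ) θ₀ := by
  have hς' : Continuous (deriv ς) := hς.continuous_deriv le_rfl
  obtain ⟨C, hC⟩ := (isCompact_closedBall θ₀ (1 + |a|)).exists_bound_of_continuousOn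
    hς'.continuousOn
  have hmem : ∀ θ ∈ Metric.ball θ₀ 1, ∀ y, θ + a * sin y ∈ Metric.closedBall θ₀ (1 + |a|) := by
    intro θ hθ y
    rw [Metric.mem_ball, dist_eq_norm] at hθ
    rw [Metric.mem_closedBall, dist_eq_norm, add_sub_right_comm]
    exact (norm_add_le _ _).trans (add_le_add hθ.le (abs_mul_sin_le a y))
  refine (hasDerivAt_integral_of_dominated_loc_of_deriv_le (μ := μ)
    (F := fun θ y => ς (θ + a * sin y) * sin y) (F' := fun θ y => deriv ς (θ + a * sin y) * sin y)
    (bound := fun _ => C) (Metric.ball_mem_nhds θ₀ one_pos) (Eventually.of_forall fun θ => ?_)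
    (integrable_comp_sin (k := fun s => ς (θ₀ + a * s) * s) (by fun_prop))
    (by fun_prop) (ae_of_all _ fun y θ hθ => ?_) (integrable_const C)
    (ae_of_all _ fun y θ _ => ?_)).2
  · have := hς.continuous
    fun_prop
  · rw [norm_mul]
    exact (mul_le_of_le_one_right (norm_nonneg _) (abs_sin_le_one y)).trans (hC _ (hmem θ hθ y))
  · have hdiff := (hς.differentiable one_ne_zero (θ + a * sin y)).hasDerivAt
    simpa using (hdiff.comp θ ((hasDerivAt_id θ).add_const (a * sin y))).mul_const (sin y)

lemma isBigO_integral_taylor_remainder_sin (μ : Measure ℝ) [IsFiniteMeasure μ] {g : ℝ → ℝ}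
    (hg : ContDiff ℝ 2 g) :
    (fun a => ∫ y, (g (a * sin y) - g 0 - deriv g 0 * (a * sin y)) * sin y ∂μ)
      =O[𝓝 0] fun a => a ^ 2 := by
  obtain ⟨C, hC, hCO⟩ := (hg.isBigO_sub_sub_deriv_mul 0).exists_nonneg
  obtain ⟨ε, hε, hCε⟩ := Metric.eventually_nhds_iff.mp hCO.bound
  refine .of_bound (C * μ.real Set.univ) ?_
  filter_upwards [Metric.ball_mem_nhds 0 hε] with a ha
  have hpoint : ∀ y, ‖(g (a * sin y) - g 0 - deriv g 0 * (a * sin y)) * sin y‖ ≤ C * a ^ 2 := by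
    intro y
    have hsin := abs_mul_sin_le a y
    have := hCε (show dist (a * sin y) 0 < ε by
      rw [Metric.mem_ball] at ha; rw [dist_zero_right] at ha ⊢; exact hsin.trans_lt ha)
    simp only [sub_zero, norm_pow, Real.norm_eq_abs] at this
    rw [norm_mul]
    calc _ ≤ ‖g (a * sin y) - g 0 - deriv g 0 * (a * sin y)‖ :=
          mul_le_of_le_one_right (norm_nonneg _) (abs_sin_le_one y)
      _ ≤ C * |a * sin y| ^ 2 := this
      _ ≤ C * a ^ 2 := by rw [← sq_abs a]; gcongr
  calc ‖∫ y, (g (a * sin y) - g 0 - deriv g 0 * (a * sin y)) * sin y ∂μ‖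
      ≤ C * a ^ 2 * μ.real Set.univ := norm_integral_le_of_norm_le_const (ae_of_all _ hpoint)
    _ = C * μ.real Set.univ * ‖a ^ 2‖ := by rw [norm_pow, Real.norm_eq_abs, sq_abs]; ring

lemma isBigO_deriv_averagedGradient_sub (μ : Measure ℝ) [IsFiniteMeasure μ] {ς : ℝ → ℝ}
    (hς : ContDiff ℝ 3 ς) (hς1 : deriv ς 0 = 0) :
    (fun a => deriv (averagedGradient μ ς a) 0 - a * (iteratedDeriv 2 ς 0 * ∫ y, sin y ^ 2 ∂μ))
      =O[𝓝 0] fun a => a ^ 2 := by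
  have hg : ContDiff ℝ 2 (deriv ς) := ContDiff.deriv' (n := 2) hς
  refine (isBigO_integral_taylor_remainder_sin μ hg).congr_left fun a => ?_
  have hderiv := (hasDerivAt_averagedGradient (μ := μ) (hς.of_le (by norm_num)) a 0).deriv
  simp only [zero_add] at hderiv
  have hint : Integrable (fun y => deriv ς (a * sin y) * sin y) μ :=
    integrable_comp_sin (k := fun s => deriv ς (a * s) * s) (by have := hg.continuous; fun_prop)
  have hint' : Integrable (fun y => a * (deriv (deriv ς) 0 * sin y ^ 2)) μ :=
    integrable_comp_sin (k := fun s => a * (deriv (deriv ς) 0 * s ^ 2)) (by fun_prop)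
  rw [hderiv, iteratedDeriv_succ', iteratedDeriv_one, hς1, ← integral_const_mul,
    ← integral_const_mul, ← integral_sub hint hint']
  congr 1 with y
  ring

lemma exists_forall_Ioo_neg_of_isBigO_sub_mul {f : ℝ → ℝ} {L : ℝ} (hL : L < 0)
    (hf : (fun a => f a - a * L) =O[𝓝 0] fun a => a ^ 2) :
    ∃ a₀, 0 < a₀ ∧ ∀ a ∈ Set.Ioo 0 a₀, f a < 0 := by
  have hsmall := (hf.trans_isLittleO (isLittleO_pow_id one_lt_two)).def (c := -L / 2) (by linarith)
  obtain ⟨a₀, ha₀, h⟩ := Metric.eventually_nhds_iff.mp hsmall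
  refine ⟨a₀, ha₀, fun a ⟨ha, ha'⟩ => ?_⟩
  have hbound := h (show dist a 0 < a₀ by rwa [dist_zero_right, norm_of_nonneg ha.le])
  rw [norm_of_nonneg ha.le, Real.norm_eq_abs] at hbound
  nlinarith [le_abs_self (f a - a * L)]

theorem averaged_gradient_estimate_general
    (ς : ℝ → ℝ) (hς : ContDiff ℝ 3 ς) (hς1 : deriv ς 0 = 0)
    (hς2 : iteratedDeriv 2 ς 0 < 0) (σ : ℝ) (hσ : 0 < σ) :
    (∀ a : ℝ, DifferentiableAt ℝ
      (fun θ : ℝ => ∫ y, ς (θ + a * Real.sin y) * Real.sin y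
        ∂(gaussianReal 0 ⟨σ ^ 2, sq_nonneg σ⟩)) 0) ∧
    (fun a : ℝ =>
        deriv (fun θ : ℝ => ∫ y, ς (θ + a * Real.sin y) * Real.sin y
          ∂(gaussianReal 0 ⟨σ ^ 2, sq_nonneg σ⟩)) 0
        - a * iteratedDeriv 2 ς 0 * (1 - Real.exp (-2 * σ ^ 2)) / 2)
      =O[nhds 0] (fun a : ℝ => a ^ 2) ∧
    (∃ a₀ : ℝ, 0 < a₀ ∧ ∀ a ∈ Set.Ioo 0 a₀,
      deriv (fun θ : ℝ => ∫ y, ς (θ + a * Real.sin y) * Real.sin y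
        ∂(gaussianReal 0 ⟨σ ^ 2, sq_nonneg σ⟩)) 0 < 0) := by
  set v : ℝ≥0 := ⟨σ ^ 2, sq_nonneg σ⟩
  have hO := isBigO_deriv_averagedGradient_sub (gaussianReal 0 v) hς hς1
  rw [integral_sin_sq_gaussianReal, show (v : ℝ) = σ ^ 2 from rfl] at hO
  unfold averagedGradient at hO
  have hL : iteratedDeriv 2 ς 0 * ((1 - exp (-2 * σ ^ 2)) / 2) < 0 :=
    mul_neg_of_neg_of_pos hς2
      (div_pos (sub_pos.mpr (exp_lt_one_iff.mpr (by linarith [pow_pos hσ 2]))) two_pos)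
  exact ⟨fun a => (hasDerivAt_averagedGradient (hς.of_le (by norm_num)) a 0).differentiableAt,
    hO.congr_left fun a => by ring, exists_forall_Ioo_neg_of_isBigO_sub_mul hL hO⟩

theorem averaged_gradient_estimate
    (ς : ℝ → ℝ) (hς : ContDiff ℝ 3 ς) (hς0 : ς 0 = 0) (hς1 : deriv ς 0 = 0)
    (hς2 : iteratedDeriv 2 ς 0 < 0) (σ : ℝ) (hσ : 0 < σ) :
    (∀ a : ℝ, DifferentiableAt ℝ
      (fun θ : ℝ => ∫ y, ς (θ + a * Real.sin y) * Real.sin y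
        ∂(gaussianReal 0 ⟨σ ^ 2, sq_nonneg σ⟩)) 0) ∧
    (fun a : ℝ =>
        deriv (fun θ : ℝ => ∫ y, ς (θ + a * Real.sin y) * Real.sin y
          ∂(gaussianReal 0 ⟨σ ^ 2, sq_nonneg σ⟩)) 0
        - a * iteratedDeriv 2 ς 0 * (1 - Real.exp (-2 * σ ^ 2)) / 2)
      =O[nhds 0] (fun a : ℝ => a ^ 2) ∧
    (∃ a₀ : ℝ, 0 < a₀ ∧ ∀ a ∈ Set.Ioo 0 a₀,
      deriv (fun θ : ℝ => ∫ y, ς (θ + a * Real.sin y) * Real.sin y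
        ∂(gaussianReal 0 ⟨σ ^ 2, sq_nonneg σ⟩)) 0 < 0) :=
  averaged_gradient_estimate_general ς hς hς1 hς2 σ hσ
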